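/- arXiv:2204.07949 — 2 statements merged into one kernel-verified Lean document; each statement's English description precedes it below -/
import Mathlib

section
/- Suppose Γ_1 is the constant function 1 on Δ, and let α* minimize E(α) = max_{1≤i≤n} |y_i − Σ_j α_j Γ_j(x_i)| with optimal value d > 0. Then there exist indices i and k such that y_i − Σ_j α*_j Γ_j(x_i) = d (an undershoot) and Σ_j α*_j Γ_j(x_k) − y_k = d (an overshoot). -/
noncomputable def unifErr {n m : ℕ} (hn : 0 < n) {Δ : Type*} (x : Fin n → Δ)
    (Γ : Fin m → Δ → ℝ) (y : Fin n → ℝ) (α : Fin m → ℝ) : ℝ :=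
  Finset.univ.sup' ⟨⟨0, hn⟩, Finset.mem_univ _⟩
    fun i => |y i - ∑ j, α j * Γ j (x i)|

/-!
Since `Γ₀ ≡ 1`, adding a constant `c` to the coefficient of `Γ₀` subtracts `c` from every
residual `rᵢ = yᵢ - ∑ⱼ α*ⱼ Γⱼ(xᵢ)`. If no residual reached `+d`, all of them would lie in
`[-d, M]` with `M < d`, and a small negative shift would bring every `|rᵢ - c|` strictly below `d`,
contradicting the optimality of `α*`; symmetrically for `-d`.
-/

section Equioscillation

variable {ι : Type*} (s : Finset ι) (r : ι → ℝ) {d : ℝ}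

theorem exists_eq_of_forall_exists_le_abs_sub (hr : ∀ i ∈ s, |r i| ≤ d)
    (hshift : ∀ c, ∃ i ∈ s, d ≤ |r i - c|) : ∃ i ∈ s, r i = d := by
  by_contra! hne
  obtain ⟨i₀, hi₀, -⟩ := hshift 0
  have hlt : ∀ i ∈ s, r i < d := fun i hi => (le_of_abs_le (hr i hi)).lt_of_ne (hne i hi)
  set M := s.sup' ⟨i₀, hi₀⟩ r
  have hM : M < d := (Finset.sup'_lt_iff _).2 hlt
  obtain ⟨i, hi, hdi⟩ := hshift ((M - d) / 2)
  have hle : r i ≤ M := Finset.le_sup' r hi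
  have hlow := neg_abs_le (r i) |>.trans' (neg_le_neg (hr i hi))
  have hsmall : |r i - (M - d) / 2| < d := abs_lt.2 ⟨by linarith, by linarith⟩
  linarith

theorem exists_eq_and_exists_eq_neg_of_forall_exists_le_abs_sub (hr : ∀ i ∈ s, |r i| ≤ d)
    (hshift : ∀ c, ∃ i ∈ s, d ≤ |r i - c|) : (∃ i ∈ s, r i = d) ∧ ∃ k ∈ s, r k = -d := by
  refine ⟨exists_eq_of_forall_exists_le_abs_sub s r hr hshift, ?_⟩
  have hr' : ∀ i ∈ s, |(-r) i| ≤ d := by simpa using hr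
  have hshift' : ∀ c, ∃ i ∈ s, d ≤ |(-r) i - c| := fun c => by
    obtain ⟨i, hi, h⟩ := hshift (-c)
    rw [sub_neg_eq_add] at h
    exact ⟨i, hi, by rwa [Pi.neg_apply, abs_sub_comm, sub_neg_eq_add, add_comm]⟩
  obtain ⟨k, hk, h⟩ := exists_eq_of_forall_exists_le_abs_sub s (-r) hr' hshift'
  exact ⟨k, hk, by rw [← h, Pi.neg_apply, neg_neg]⟩

end Equioscillation

theorem sum_add_single_mul {κ : Type*} [Fintype κ] [DecidableEq κ] (α f : κ → ℝ) (j₀ : κ)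
    (c : ℝ) : ∑ j, (α + Pi.single j₀ c : κ → ℝ) j * f j = ∑ j, α j * f j + c * f j₀ := by
  simp [add_mul, Finset.sum_add_distrib, Pi.single_apply]

section UniformError

variable {n m : ℕ} (hn : 0 < n) {Δ : Type*} (x : Fin n → Δ) (Γ : Fin m → Δ → ℝ) (y : Fin n → ℝ)
  (α : Fin m → ℝ)

theorem abs_sub_sum_le_unifErr (i : Fin n) :
    |y i - ∑ j, α j * Γ j (x i)| ≤ unifErr hn x Γ y α :=
  Finset.le_sup' (fun i => |y i - ∑ j, α j * Γ j (x i)|) (Finset.mem_univ i)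

theorem le_unifErr_iff {d : ℝ} :
    d ≤ unifErr hn x Γ y α ↔ ∃ i ∈ Finset.univ, d ≤ |y i - ∑ j, α j * Γ j (x i)| :=
  Finset.le_sup'_iff _

end UniformError

theorem overshoot_undershoot_general {n m : ℕ} (hn : 0 < n) (hm : 0 < m) {Δ : Type*}
    (x : Fin n → Δ) (Γ : Fin m → Δ → ℝ) (y : Fin n → ℝ)
    (hΓ1 : ∀ s : Δ, Γ ⟨0, hm⟩ s = 1)
    (αstar : Fin m → ℝ) (d : ℝ)
    (hval : unifErr hn x Γ y αstar = d)
    (hopt : ∀ α : Fin m → ℝ, d ≤ unifErr hn x Γ y α) :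
    (∃ i : Fin n, y i - ∑ j, αstar j * Γ j (x i) = d) ∧
      (∃ k : Fin n, (∑ j, αstar j * Γ j (x k)) - y k = d) := by
  set r : Fin n → ℝ := fun i => y i - ∑ j, αstar j * Γ j (x i)
  have hbound : ∀ i ∈ Finset.univ, |r i| ≤ d := fun i _ =>
    hval ▸ abs_sub_sum_le_unifErr hn x Γ y αstar i
  have hshift : ∀ c, ∃ i ∈ Finset.univ, d ≤ |r i - c| := fun c => by
    obtain ⟨i, hi, h⟩ := (le_unifErr_iff hn x Γ y _).1 (hopt (αstar + Pi.single ⟨0, hm⟩ c))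
    rw [sum_add_single_mul, hΓ1, mul_one, ← sub_sub] at h
    exact ⟨i, hi, h⟩
  obtain ⟨⟨i, -, hi⟩, ⟨k, -, hk⟩⟩ :=
    exists_eq_and_exists_eq_neg_of_forall_exists_le_abs_sub _ r hbound hshift
  exact ⟨⟨i, hi⟩, ⟨k, by linarith [show r k = _ from hk]⟩⟩

theorem overshoot_undershoot {n m : ℕ} (hn : 0 < n) (hm : 0 < m) {Δ : Type*}
    (x : Fin n → Δ) (Γ : Fin m → Δ → ℝ) (y : Fin n → ℝ)
    (hΓ1 : ∀ s : Δ, Γ ⟨0, hm⟩ s = 1)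
    (αstar : Fin m → ℝ) (d : ℝ) (hd : 0 < d)
    (hval : unifErr hn x Γ y αstar = d)
    (hopt : ∀ α : Fin m → ℝ, d ≤ unifErr hn x Γ y α) :
    (∃ i : Fin n, y i - ∑ j, αstar j * Γ j (x i) = d) ∧
      (∃ k : Fin n, (∑ j, αstar j * Γ j (x k)) - y k = d) :=
  overshoot_undershoot_general hn hm x Γ y hΓ1 αstar d hval hopt
end

section
/- Strong duality value identity for the discrete Chebyshev problem: min_{α ∈ ℝ^m} max_{1≤i≤n} |y_i − Σ_j α_j Γ_j(x_i)| = max { Σ_i (β_{2i−1} − β_{2i}) y_i : β ∈ ℝ^{2n}, β ≥ 0, Σ_i β_i = 1, Σ_i (β_{2i−1} − β_{2i}) Γ_k(x_i) = 0 for all k }. -/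
open Metric Matrix

theorem Submodule.exists_linearMap_le_norm_eq_infDist {E : Type*} [SeminormedAddCommGroup E]
    [NormedSpace ℝ E] (V : Submodule ℝ E) (y : E) :
    ∃ φ : E →ₗ[ℝ] ℝ, (∀ z, φ z ≤ ‖z‖) ∧ (∀ v ∈ V, φ v = 0) ∧ φ y = infDist y V := by
  obtain ⟨g, hg_norm, hg_y⟩ := exists_dual_vector'' ℝ (V.mkQ y)
  refine ⟨g.toLinearMap ∘ₗ V.mkQ, fun z => ?_, fun v hv => ?_, ?_⟩
  · calc g (V.mkQ z) ≤ ‖g‖ * ‖V.mkQ z‖ := (le_abs_self _).trans (g.le_opNorm _)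
      _ ≤ 1 * ‖z‖ := by gcongr; exact Submodule.Quotient.norm_mk_le V z
      _ = ‖z‖ := one_mul _
  · simp [(Submodule.Quotient.mk_eq_zero V).2 hv]
  · exact hg_y.trans (QuotientAddGroup.norm_mk y)

section FiniteSupNorm

variable {ι : Type*} [Fintype ι]

theorem pi_norm_eq_sup'_abs (h : (Finset.univ : Finset ι).Nonempty) (f : ι → ℝ) :
    ‖f‖ = Finset.univ.sup' h (fun i => |f i|) := by
  obtain ⟨i₀, hi₀⟩ := h
  have h_nonneg : 0 ≤ Finset.univ.sup' ⟨i₀, hi₀⟩ (fun i => |f i|) :=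
    (abs_nonneg _).trans (Finset.le_sup' (fun i => |f i|) hi₀)
  refine le_antisymm ((pi_norm_le_iff_of_nonneg h_nonneg).2 fun i => ?_)
    (Finset.sup'_le _ _ fun i _ => norm_le_pi_norm f i)
  exact Finset.le_sup' (fun i => |f i|) (Finset.mem_univ i)

theorem dotProduct_le_sum_abs_mul_norm (c z : ι → ℝ) : c ⬝ᵥ z ≤ (∑ i, |c i|) * ‖z‖ := by
  rw [dotProduct, Finset.sum_mul]
  refine Finset.sum_le_sum fun i _ => ?_
  calc c i * z i ≤ |c i| * |z i| := by rw [← abs_mul]; exact le_abs_self _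
    _ ≤ |c i| * ‖z‖ := by gcongr; exact norm_le_pi_norm z i

variable [DecidableEq ι]

theorem LinearMap.apply_eq_dotProduct (φ : (ι → ℝ) →ₗ[ℝ] ℝ) (z : ι → ℝ) :
    φ z = (fun i => φ (Pi.single i 1)) ⬝ᵥ z := by
  conv_lhs => rw [pi_eq_sum_univ' z]
  simp [dotProduct, mul_comm]

theorem LinearMap.sum_abs_apply_single_le_one (φ : (ι → ℝ) →ₗ[ℝ] ℝ) (hφ : ∀ z, φ z ≤ ‖z‖) :
    ∑ i, |φ (Pi.single i 1)| ≤ 1 := by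
  set s : ι → ℝ := fun i => SignType.sign (φ (Pi.single i 1))
  have hs : ‖s‖ ≤ 1 := by
    refine (pi_norm_le_iff_of_nonneg zero_le_one).2 fun i => ?_
    rcases lt_trichotomy (φ (Pi.single i 1)) 0 with h | h | h <;> simp [s, h]
  calc ∑ i, |φ (Pi.single i 1)| = φ s := by simp [φ.apply_eq_dotProduct s, dotProduct, s]
    _ ≤ 1 := (hφ s).trans hs

end FiniteSupNorm

namespace Matrix

variable {ι κ : Type*} [Fintype ι] [Fintype κ]

theorem dotProduct_le_norm_sub_mulVec (M : Matrix ι κ ℝ) (y : ι → ℝ) {c : ι → ℝ}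
    (hc : ∑ i, |c i| ≤ 1) (hcM : c ᵥ* M = 0) (α : κ → ℝ) : c ⬝ᵥ y ≤ ‖y - M *ᵥ α‖ :=
  calc c ⬝ᵥ y = c ⬝ᵥ (y - M *ᵥ α) := by
        rw [dotProduct_sub, dotProduct_mulVec, hcM, zero_dotProduct, sub_zero]
    _ ≤ (∑ i, |c i|) * ‖y - M *ᵥ α‖ := dotProduct_le_sum_abs_mul_norm c _
    _ ≤ ‖y - M *ᵥ α‖ := mul_le_of_le_one_left (norm_nonneg _) hc

theorem isGreatest_dotProduct_iInf_norm_sub_mulVec (M : Matrix ι κ ℝ) (y : ι → ℝ) :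
    IsGreatest {v | ∃ c : ι → ℝ, ∑ i, |c i| ≤ 1 ∧ c ᵥ* M = 0 ∧ v = c ⬝ᵥ y}
      (⨅ α, ‖y - M *ᵥ α‖) := by
  classical
  refine ⟨?_, fun v ⟨c, hc, hcM, hv⟩ => hv ▸ le_ciInf (dotProduct_le_norm_sub_mulVec M y hc hcM)⟩
  obtain ⟨φ, hφ_le, hφ_range, hφ_y⟩ :=
    (LinearMap.range M.mulVecLin).exists_linearMap_le_norm_eq_infDist y
  set c : ι → ℝ := fun i => φ (Pi.single i 1)
  have hc : ∑ i, |c i| ≤ 1 := φ.sum_abs_apply_single_le_one hφ_le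
  have hcM : c ᵥ* M = 0 := by
    funext k
    have hcol : (c ᵥ* M) k = φ (M *ᵥ Pi.single k 1) := by
      rw [φ.apply_eq_dotProduct, mulVec_single_one]; rfl
    exact hcol.trans (hφ_range _ ⟨Pi.single k 1, rfl⟩)
  have hbdd : BddBelow (Set.range fun α => ‖y - M *ᵥ α‖) :=
    ⟨0, by rintro _ ⟨α, rfl⟩; exact norm_nonneg _⟩
  have h_le : (⨅ α, ‖y - M *ᵥ α‖) ≤ c ⬝ᵥ y := by
    rw [← φ.apply_eq_dotProduct, hφ_y, le_infDist ⟨0, Submodule.zero_mem _⟩]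
    rintro _ ⟨α, rfl⟩
    exact (ciInf_le hbdd α).trans_eq (dist_eq_norm _ _).symm
  exact ⟨c, hc, hcM, le_antisymm h_le (le_ciInf (dotProduct_le_norm_sub_mulVec M y hc hcM))⟩

end Matrix

theorem exists_nonneg_sub_eq_of_sum_abs_le_one {ι : Type*} [Fintype ι] [Nonempty ι]
    {c : ι → ℝ} (hc : ∑ i, |c i| ≤ 1) :
    ∃ βo βe : ι → ℝ, (∀ i, 0 ≤ βo i) ∧ (∀ i, 0 ≤ βe i) ∧ ∑ i, (βo i + βe i) = 1 ∧
      βo - βe = c := by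
  -- split `c` into positive and negative parts, then spread the slack `1 - ∑ |c i|` evenly
  set t := (1 - ∑ i, |c i|) / (2 * Fintype.card ι)
  have ht : 0 ≤ t := by have := Fintype.card_pos (α := ι); positivity
  refine ⟨fun i => (|c i| + c i) / 2 + t, fun i => (|c i| - c i) / 2 + t,
    fun i => by linarith [neg_abs_le (c i)], fun i => by linarith [le_abs_self (c i)], ?_,
    by funext i; simp only [Pi.sub_apply]; ring⟩
  calc ∑ i, ((|c i| + c i) / 2 + t + ((|c i| - c i) / 2 + t))
      = ∑ i, (|c i| + 2 * t) := Finset.sum_congr rfl fun i _ => by ring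
    _ = ∑ i, |c i| + Fintype.card ι * (2 * t) := by
        rw [Finset.sum_add_distrib, Finset.sum_const, Finset.card_univ, nsmul_eq_mul]
    _ = 1 := by simp only [t]; field_simp; ring

theorem setOf_exists_nonneg_sub_eq_setOf_sum_abs_le_one {ι κ : Type*} [Fintype ι] [Nonempty ι]
    (M : Matrix ι κ ℝ) (y : ι → ℝ) :
    {v | ∃ βo βe : ι → ℝ, (∀ i, 0 ≤ βo i) ∧ (∀ i, 0 ≤ βe i) ∧ ∑ i, (βo i + βe i) = 1 ∧
        (βo - βe) ᵥ* M = 0 ∧ v = (βo - βe) ⬝ᵥ y} =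
      {v | ∃ c : ι → ℝ, ∑ i, |c i| ≤ 1 ∧ c ᵥ* M = 0 ∧ v = c ⬝ᵥ y} := by
  ext v
  constructor
  · rintro ⟨βo, βe, hβo, hβe, hsum, hM, rfl⟩
    refine ⟨βo - βe, (Finset.sum_le_sum fun i _ => ?_).trans hsum.le, hM, rfl⟩
    calc |βo i - βe i| ≤ |βo i| + |βe i| := abs_sub _ _
      _ = βo i + βe i := by rw [abs_of_nonneg (hβo i), abs_of_nonneg (hβe i)]
  · rintro ⟨c, hc, hM, rfl⟩
    obtain ⟨βo, βe, hβo, hβe, hsum, rfl⟩ := exists_nonneg_sub_eq_of_sum_abs_le_one hc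
    exact ⟨βo, βe, hβo, hβe, hsum, hM, rfl⟩

theorem unifErr_eq_norm_sub_mulVec {n m : ℕ} (hn : 0 < n) {Δ : Type*} (x : Fin n → Δ)
    (Γ : Fin m → Δ → ℝ) (y : Fin n → ℝ) (α : Fin m → ℝ) :
    unifErr hn x Γ y α = ‖y - of (fun i k => Γ k (x i)) *ᵥ α‖ := by
  rw [unifErr, pi_norm_eq_sup'_abs ⟨⟨0, hn⟩, Finset.mem_univ _⟩]
  simp only [Pi.sub_apply, mulVec, dotProduct, of_apply, mul_comm]

theorem strong_duality_general {n m : ℕ} (hn : 0 < n) {Δ : Type*}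
    (x : Fin n → Δ) (Γ : Fin m → Δ → ℝ) (y : Fin n → ℝ) :
    (⨅ α : Fin m → ℝ, unifErr hn x Γ y α) =
      sSup {v : ℝ | ∃ βo βe : Fin n → ℝ, (∀ i, 0 ≤ βo i) ∧ (∀ i, 0 ≤ βe i) ∧
        (∑ i, (βo i + βe i)) = 1 ∧
        (∀ k : Fin m, ∑ i, (βo i - βe i) * Γ k (x i) = 0) ∧
        v = ∑ i, (βo i - βe i) * y i} := by
  have : Nonempty (Fin n) := ⟨⟨0, hn⟩⟩
  simp only [unifErr_eq_norm_sub_mulVec]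
  set M : Matrix (Fin n) (Fin m) ℝ := of fun i k => Γ k (x i)
  rw [← (isGreatest_dotProduct_iInf_norm_sub_mulVec M y).csSup_eq,
    ← setOf_exists_nonneg_sub_eq_setOf_sum_abs_le_one]
  simp only [funext_iff, vecMul, dotProduct, Pi.sub_apply, Pi.zero_apply, M, of_apply]

theorem strong_duality {n m : ℕ} (hn : 0 < n) (hm : 0 < m) {Δ : Type*}
    (x : Fin n → Δ) (Γ : Fin m → Δ → ℝ) (y : Fin n → ℝ)
    (hne : ∃ βo βe : Fin n → ℝ, (∀ i, 0 ≤ βo i) ∧ (∀ i, 0 ≤ βe i) ∧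
      (∑ i, (βo i + βe i)) = 1 ∧ ∀ k : Fin m, ∑ i, (βo i - βe i) * Γ k (x i) = 0) :
    (⨅ α : Fin m → ℝ, unifErr hn x Γ y α) =
      sSup {v : ℝ | ∃ βo βe : Fin n → ℝ, (∀ i, 0 ≤ βo i) ∧ (∀ i, 0 ≤ βe i) ∧
        (∑ i, (βo i + βe i)) = 1 ∧
        (∀ k : Fin m, ∑ i, (βo i - βe i) * Γ k (x i) = 0) ∧
        v = ∑ i, (βo i - βe i) * y i} :=
  strong_duality_general hn x Γ y
end
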